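/- arXiv:2111.03771 — 5 statements merged into one kernel-verified Lean document; each statement's English description precedes it below -/
import Mathlib

section
/- Let d ≥ 2. For each i ∈ [1,n] define the formal power series g_i = Σ_{(T,λ)} w(T,λ) · Π_{v a leaf of T} x_{λ(v)} in R[[x_1,…,x_n]], where the sum runs over all d-regular rooted plane trees T together with labelings λ : V(T) → [1,n] whose root is labeled i. Then g = (g_1,…,g_n) is the formal inverse of f, i.e., f_i(g_1(x),…,g_n(x)) = x_i as formal power series for every i ∈ [1,n]. -/
open MvPolynomial

/-- A rooted plane tree with vertices labeled by `[1,n]`: a root label together with a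
(linearly ordered) finite list of labeled subtrees. -/
inductive LTree (n : ℕ) : Type where
  | node : Fin n → List (LTree n) → LTree n

namespace LTree

/-- The label of the root. -/
def label {n : ℕ} : LTree n → Fin n
  | node i _ => i

/-- The (ordered) list of subtrees rooted at the children of the root. -/
def children {n : ℕ} : LTree n → List (LTree n)
  | node _ cs => cs

/-- The weight `w(T,λ) = ∏_{e} w(e,λ)`, the product over all edges `e` of `T`, from a
parent labeled `i` to a child labeled `j`, of the indeterminate `a_{i,j}`. -/
noncomputable def weight {n : ℕ} : LTree n → MvPolynomial (Fin n × Fin n) ℚ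
  | node i cs => (cs.attach.map fun c => X (i, c.1.label) * weight c.1).prod
decreasing_by simp only [LTree.node.sizeOf_spec]; have := List.sizeOf_lt_of_mem c.2; omega

/-- The multidegree given by the labels of the leaves of `T` (a tree with no children is
a single leaf). -/
noncomputable def leafDeg {n : ℕ} : LTree n → (Fin n →₀ ℕ)
  | node i [] => Finsupp.single i 1
  | node _ (c :: cs) => ((c :: cs).attach.map fun x => leafDeg x.1).sum
decreasing_by simp only [LTree.node.sizeOf_spec]; have := List.sizeOf_lt_of_mem x.2; omega

/-- A tree is `d`-regular if every vertex has exactly `d` children or none. -/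
def IsReg {n : ℕ} (d : ℕ) : LTree n → Prop
  | node _ cs => (cs.length = d ∨ cs.length = 0) ∧ ∀ c ∈ cs.attach, IsReg d c.1
decreasing_by simp only [LTree.node.sizeOf_spec]; have := List.sizeOf_lt_of_mem c.2; omega

/-- The subtree of `T` at the position given by a list of child indices (root = `[]`),
or `none` if no such vertex exists. -/
def subtreeAt? {n : ℕ} : LTree n → List ℕ → Option (LTree n)
  | t, [] => some t
  | t, k :: q => match t.children[k]? with
    | some c => subtreeAt? c q
    | none => none

/-- The label of the vertex of `T` at a given position, if it exists. -/
def labelAt? {n : ℕ} (t : LTree n) (q : List ℕ) : Option (Fin n) :=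
  (t.subtreeAt? q).map label

end LTree

/-!
Cutting a `d`-regular tree at its root shows that the tree series satisfy
`g_i = x_i + (∑_j a_{i,j} g_j)^d`, which is `f_i(g) = x_i`: the single leaf labeled `i` gives
`x_i`, and a root labeled `i` whose `d` ordered subtrees have roots labeled `j_1, …, j_d`
contributes `a_{i,j_1} ⋯ a_{i,j_d}` times the product of the subtrees' terms, leaf degrees being
additive. For `d ≥ 2` every subtree has strictly smaller leaf degree than the whole tree, so only
finitely many trees have a given leaf degree and every coefficient is a finite sum.
-/

open Finset

namespace LTree

variable {n d : ℕ}

@[simp]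
lemma label_node (i : Fin n) (cs : List (LTree n)) : (node i cs).label = i := rfl

lemma weight_node (i : Fin n) (cs : List (LTree n)) :
    weight (node i cs) = (cs.map fun c => X (i, c.label) * weight c).prod := by
  rw [weight, List.attach_map_val (f := fun c => X (i, c.label) * weight c)]

lemma weight_leaf (i : Fin n) : weight (node i []) = 1 := by
  simp [weight_node]

lemma weight_node_ofFn (i : Fin n) (f : Fin d → LTree n) :
    weight (node i (List.ofFn f)) = ∏ k, X (i, (f k).label) * weight (f k) := by
  rw [weight_node, List.map_ofFn, List.prod_ofFn, Function.comp_def]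

lemma leafDeg_leaf (i : Fin n) : leafDeg (node i []) = Finsupp.single i 1 := by
  rw [leafDeg]

lemma leafDeg_node_ofFn (hd : d ≠ 0) (i : Fin n) (f : Fin d → LTree n) :
    leafDeg (node i (List.ofFn f)) = ∑ k, leafDeg (f k) := by
  obtain ⟨c, cs, hcs⟩ := List.exists_cons_of_ne_nil (mt List.ofFn_eq_nil_iff.1 hd)
  rw [hcs, leafDeg, List.attach_map_val (f := leafDeg), ← hcs, List.map_ofFn, List.sum_ofFn,
    Function.comp_def]

lemma isReg_node_iff {i : Fin n} {cs : List (LTree n)} :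
    IsReg d (node i cs) ↔
      cs = [] ∨ ∃ f : Fin d → LTree n, cs = List.ofFn f ∧ ∀ k, IsReg d (f k) := by
  rw [IsReg]
  simp only [List.length_eq_zero_iff, List.mem_attach, forall_const, Subtype.forall]
  constructor
  · rintro ⟨hlen | rfl, hcs⟩
    · subst hlen
      exact Or.inr ⟨cs.get, (List.ofFn_get cs).symm, fun k => hcs _ (List.get_mem _ _)⟩
    · exact Or.inl rfl
  · rintro (rfl | ⟨f, rfl, hf⟩)
    · simp
    · simp [hf]

lemma isReg_leaf (i : Fin n) : IsReg d (node i []) :=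
  isReg_node_iff.2 (Or.inl rfl)

lemma isReg_node_ofFn {i : Fin n} {f : Fin d → LTree n} (hf : ∀ k, IsReg d (f k)) :
    IsReg d (node i (List.ofFn f)) :=
  isReg_node_iff.2 (Or.inr ⟨f, rfl, hf⟩)

lemma degree_leafDeg_pos : ∀ T : LTree n, 0 < T.leafDeg.degree
  | node i [] => by simp [leafDeg_leaf]
  | node i (c :: cs) => by
    rw [leafDeg, List.attach_map_val (f := leafDeg), List.map_cons, List.sum_cons, map_add]
    have := degree_leafDeg_pos c
    omega

lemma degree_leafDeg_lt_of_two_le (hd : 2 ≤ d) (f : Fin d → LTree n) (k : Fin d) :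
    (f k).leafDeg.degree < (∑ k, (f k).leafDeg).degree := by
  have : Nontrivial (Fin d) := Fin.nontrivial_iff_two_le.2 hd
  obtain ⟨j, hj⟩ := exists_ne k
  rw [map_sum]
  exact single_lt_sum (f := fun k => (f k).leafDeg.degree) hj (mem_univ k) (mem_univ j)
    (degree_leafDeg_pos _) fun _ _ _ => Nat.zero_le _

lemma finite_setOf_isReg_degree_le (hd : 2 ≤ d) (N : ℕ) :
    {T : LTree n | IsReg d T ∧ T.leafDeg.degree ≤ N}.Finite := by
  induction N with
  | zero =>
    convert Set.finite_empty
    ext T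
    simpa using fun _ => (degree_leafDeg_pos T).ne'
  | succ N ih =>
    refine ((Set.finite_range fun i : Fin n => node i []).union
      (Set.finite_iUnion fun i => (Set.Finite.pi fun _ : Fin d => ih).image
        fun f => node i (List.ofFn f))).subset ?_
    rintro ⟨i, cs⟩ ⟨hreg, hdeg⟩
    rcases isReg_node_iff.1 hreg with rfl | ⟨f, rfl, hf⟩
    · exact Or.inl ⟨i, rfl⟩
    · refine Or.inr (Set.mem_iUnion.2 ⟨i, f, fun k _ => ⟨hf k, ?_⟩, rfl⟩)
      rw [leafDeg_node_ofFn (by omega)] at hdeg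
      have := degree_leafDeg_lt_of_two_le hd f k
      omega

lemma finite_setOf_isReg_leafDeg_eq (hd : 2 ≤ d) (α : Fin n →₀ ℕ) :
    {T : LTree n | IsReg d T ∧ T.leafDeg = α}.Finite :=
  (finite_setOf_isReg_degree_le hd α.degree).subset fun _ ⟨hT, hα⟩ => ⟨hT, hα ▸ le_rfl⟩

noncomputable def regTrees (hd : 2 ≤ d) (α : Fin n →₀ ℕ) : Finset (LTree n) :=
  (finite_setOf_isReg_leafDeg_eq hd α).toFinset

@[simp]
lemma mem_regTrees {hd : 2 ≤ d} {α : Fin n →₀ ℕ} {T : LTree n} :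
    T ∈ regTrees hd α ↔ IsReg d T ∧ T.leafDeg = α :=
  Set.Finite.mem_toFinset _

lemma finsum_weight_eq_sum_regTrees (hd : 2 ≤ d) (i : Fin n) (α : Fin n →₀ ℕ) :
    ∑ᶠ T ∈ {T : LTree n | T.IsReg d ∧ T.label = i ∧ T.leafDeg = α}, T.weight =
      ∑ T ∈ regTrees hd α with T.label = i, T.weight := by
  have hset : {T : LTree n | T.IsReg d ∧ T.label = i ∧ T.leafDeg = α} =
      ↑{T ∈ regTrees hd α | T.label = i} := by
    ext T
    simp only [Set.mem_ofPred_eq, coe_filter, mem_regTrees]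
    tauto
  rw [hset, finsum_mem_coe_finset]

open Classical in
lemma filter_label_regTrees_eq (hd : 2 ≤ d) (i : Fin n) (α : Fin n →₀ ℕ) :
    {T ∈ regTrees hd α | T.label = i} =
      (if α = Finsupp.single i 1 then {node i []} else ∅) ∪
        ((finsuppAntidiag (univ : Finset (Fin d)) α).biUnion fun l =>
          Fintype.piFinset fun k => regTrees hd (l k)).image fun f => node i (List.ofFn f) := by
  ext ⟨j, cs⟩
  simp only [mem_filter, mem_regTrees, mem_union, mem_image, mem_biUnion, Fintype.mem_piFinset,
    mem_finsuppAntidiag, label_node]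
  constructor
  · rintro ⟨⟨hreg, rfl⟩, rfl⟩
    rcases isReg_node_iff.1 hreg with rfl | ⟨f, rfl, hf⟩
    · simp [leafDeg_leaf]
    · refine Or.inr ⟨f, ⟨Finsupp.equivFunOnFinite.symm fun k => (f k).leafDeg,
        ⟨?_, subset_univ _⟩, fun k => ⟨hf k, rfl⟩⟩, rfl⟩
      simp [leafDeg_node_ofFn (by omega : d ≠ 0)]
  · rintro (h | ⟨f, ⟨l, ⟨hl, -⟩, hf⟩, h⟩)
    · split_ifs at h with hα
      · obtain ⟨rfl, rfl⟩ := by simpa using h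
        exact ⟨⟨isReg_leaf _, by rw [leafDeg_leaf, hα]⟩, rfl⟩
      · simp at h
    · obtain ⟨rfl, rfl⟩ := by simpa using h
      refine ⟨⟨isReg_node_ofFn fun k => (hf k).1, ?_⟩, rfl⟩
      rw [leafDeg_node_ofFn (by omega), ← hl]
      exact sum_congr rfl fun k _ => (hf k).2

lemma sum_weight_filter_label_regTrees (hd : 2 ≤ d) (i : Fin n) (α : Fin n →₀ ℕ) :
    ∑ T ∈ regTrees hd α with T.label = i, T.weight =
      (if α = Finsupp.single i 1 then 1 else 0) +
        ∑ l ∈ finsuppAntidiag (univ : Finset (Fin d)) α,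
          ∏ k, ∑ T ∈ regTrees hd (l k), X (i, T.label) * T.weight := by
  classical
  rw [filter_label_regTrees_eq, sum_union, sum_image, sum_biUnion]
  · congr 1
    · split_ifs <;> simp [weight_leaf]
    · refine sum_congr rfl fun l _ => ?_
      simp_rw [weight_node_ofFn]
      exact (prod_univ_sum (fun k => regTrees hd (l k))
        fun _ T => X (i, T.label) * T.weight).symm
  · intro l _ l' _ hne
    refine disjoint_left.2 fun f hf hf' => hne ?_
    ext k : 1
    simp only [Fintype.mem_piFinset, mem_regTrees] at hf hf'
    rw [← (hf k).2, (hf' k).2]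
  · intro f _ f' _ h
    simpa using h
  · split_ifs
    · simpa using fun _ _ _ _ => by omega
    · exact disjoint_empty_left _

lemma sum_X_mul_sum_weight_filter_label (i : Fin n) (s : Finset (LTree n)) :
    ∑ j, X (i, j) * ∑ T ∈ s with T.label = j, T.weight =
      ∑ T ∈ s, X (i, T.label) * T.weight := by
  rw [← sum_fiberwise s label]
  refine sum_congr rfl fun j _ => ?_
  rw [mul_sum]
  exact sum_congr rfl fun T hT => by rw [(mem_filter.1 hT).2]

end LTree

noncomputable section

/-- `R n` is the polynomial ring `ℚ[a_{i,j} : 1 ≤ i,j ≤ n]`. -/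
abbrev JacR (n : ℕ) : Type := MvPolynomial (Fin n × Fin n) ℚ

theorem stmt0_general (n d : ℕ) (hd : 2 ≤ d)
    (g : Fin n → MvPowerSeries (Fin n) (JacR n))
    (hg : ∀ (i : Fin n) (α : Fin n →₀ ℕ),
      MvPowerSeries.coeff (R := JacR n) α (g i) =
        ∑ᶠ T ∈ {T : LTree n | T.IsReg d ∧ T.label = i ∧ T.leafDeg = α}, T.weight) :
    ∀ i : Fin n,
      g i - (∑ j : Fin n, MvPowerSeries.C (σ := Fin n) (R := JacR n) (X (i, j)) * g j) ^ d =
        MvPowerSeries.X i := by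
  intro i
  ext α
  have hcoeff : ∀ β, MvPowerSeries.coeff β
      (∑ j : Fin n, MvPowerSeries.C (σ := Fin n) (R := JacR n) (X (i, j)) * g j) =
        ∑ T ∈ LTree.regTrees hd β, X (i, T.label) * T.weight := fun β => by
    simp only [map_sum, MvPowerSeries.coeff_C_mul, hg, LTree.finsum_weight_eq_sum_regTrees hd]
    exact LTree.sum_X_mul_sum_weight_filter_label i _
  rw [map_sub, MvPowerSeries.coeff_X, ← Fin.prod_const, MvPowerSeries.coeff_prod]
  simp only [hcoeff, hg, LTree.finsum_weight_eq_sum_regTrees hd,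
    LTree.sum_weight_filter_label_regTrees hd]
  exact add_sub_cancel_right _ _

/-- let `d ≥ 2` and let `g_i` be the formal power series whose coefficient at
each multidegree `α` is the (finite) sum of the weights `w(T,λ)` over all `d`-regular
labeled rooted plane trees whose root is labeled `i` and whose leaf labels realize the
multidegree `α` (i.e. `g_i = ∑_{(T,λ)} w(T,λ) ∏_{v leaf} x_{λ(v)}`).  Then
`f_i(g_1,…,g_n) = g_i - (∑_j a_{i,j} g_j)^d = x_i` as formal power series, i.e. `g` is the
formal inverse of the degree `d`-linear map `f`. -/
theorem stmt0 (n d : ℕ) (hn : 1 ≤ n) (hd : 2 ≤ d)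
    (g : Fin n → MvPowerSeries (Fin n) (JacR n))
    (hg : ∀ (i : Fin n) (α : Fin n →₀ ℕ),
      MvPowerSeries.coeff (R := JacR n) α (g i) =
        ∑ᶠ T ∈ {T : LTree n | T.IsReg d ∧ T.label = i ∧ T.leafDeg = α}, T.weight) :
    ∀ i : Fin n,
      g i - (∑ j : Fin n, MvPowerSeries.C (σ := Fin n) (R := JacR n) (X (i, j)) * g j) ^ d =
        MvPowerSeries.X i :=
  stmt0_general n d hd g hg
end
end

section
/- Let d ≥ 2. For integers 1 ≤ k ≤ n and 1 ≤ l ≤ n, let α(k,l) be the multi-degree whose l-th entry is k(d−1) and whose other entries are 0, and let J_{α(k,l)} ∈ R be the coefficient of x_l^{k(d−1)} in Jac(f). Then J_{α(k,l)} = (−d)^k · Σ_{1 ≤ i_1 < i_2 < ⋯ < i_k ≤ n} |A|_{(i_1,…,i_k)} · Π_{r=1}^k a_{i_r,l}^{d−1}, where |A|_{(i_1,…,i_k)} denotes the principal minor of A on rows and columns i_1,…,i_k. -/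
open MvPolynomial Matrix

noncomputable section

/-- The `i`-th component of the degree `d`-linear map:
`f_i = x_i - (∑_j a_{i,j} x_j)^d`, as a polynomial in `x_1,…,x_n` over `R n`. -/
def degLinMap (n d : ℕ) (i : Fin n) : MvPolynomial (Fin n) (JacR n) :=
  X i - (∑ j : Fin n, C (X (i, j) : JacR n) * X j) ^ d

/-- The differential `D(f)`, with `(D(f))_{i,j} = ∂f_i/∂x_j`. -/
def diffMat (n d : ℕ) : Matrix (Fin n) (Fin n) (MvPolynomial (Fin n) (JacR n)) :=
  fun i j => pderiv j (degLinMap n d i)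

/-- The Jacobian `Jac(f) = det(D(f))`. -/
def jacPoly (n d : ℕ) : MvPolynomial (Fin n) (JacR n) := (diffMat n d).det

/-- The matrix `A` with entries the indeterminates `a_{i,j}`. -/
def Amat (n : ℕ) : Matrix (Fin n) (Fin n) (JacR n) := fun i j => X (i, j)

/-!
Setting `x_j = 0` for `j ≠ l` and `x_l = t` does not change the coefficients of the pure powers
of `x_l`. After this specialization `∑_j a_{i,j} x_j = a_{i,l} t`, so `D(f)` becomes
`1 + t^{d-1} N` with `N = -d · diag(a_{1,l}^{d-1}, …, a_{n,l}^{d-1}) · A`, and the coefficient of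
`t^{k(d-1)}` in `det (1 + t^{d-1} N)` is the sum of the `k × k` principal minors of `N`.
-/

namespace MvPolynomial

variable {σ R : Type*} [CommSemiring R] [DecidableEq σ]

theorem coeff_aeval_piSingle_X (l : σ) (P : MvPolynomial σ R) (m : ℕ) :
    (aeval (Pi.single l Polynomial.X) P).coeff m = coeff (Finsupp.single l m) P := by
  induction P using MvPolynomial.induction_on' with
  | add p q hp hq => rw [map_add, Polynomial.coeff_add, coeff_add, hp, hq]
  | monomial u a =>
    rw [aeval_monomial, coeff_monomial]
    by_cases hu : u = Finsupp.single l (u l)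
    · rw [hu, Finsupp.prod_single_index (by simp), Pi.single_eq_same, Polynomial.algebraMap_eq,
        Polynomial.coeff_C_mul_X_pow]
      simp only [(Finsupp.single_injective l).eq_iff, eq_comm]
    · obtain ⟨j, hj, hjl⟩ : ∃ j ∈ u.support, j ≠ l := by
        by_contra! h
        exact hu (Finsupp.support_subset_singleton.mp fun j hj => by simp [h j hj])
      rw [Finsupp.prod, Finset.prod_eq_zero hj (by simp [hjl, Finsupp.mem_support_iff.mp hj]),
        mul_zero, Polynomial.coeff_zero, if_neg]
      rintro rfl
      simp [hjl.symm] at hj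

end MvPolynomial

namespace Matrix

variable {ι R : Type*} [Fintype ι] [DecidableEq ι] [CommRing R]

theorem coeff_det_one_add_X_pow_smul_eq_sum_minors (N : Matrix ι ι R) {p : ℕ} (hp : 0 < p)
    (k : ℕ) :
    (det (1 + (Polynomial.X ^ p : Polynomial R) • N.map Polynomial.C)).coeff (k * p) =
      ∑ s ∈ Finset.univ.powersetCard k, (N.submatrix (Subtype.val : s → ι) Subtype.val).det := by
  have h : (1 + (Polynomial.X ^ p : Polynomial R) • N.map Polynomial.C) =
      (Polynomial.expand R p).mapMatrix
        (1 + (Polynomial.X : Polynomial R) • N.map Polynomial.C) := by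
    ext i j : 1
    simp [Matrix.one_apply, apply_ite]
  rw [h, ← AlgHom.map_det, Polynomial.coeff_expand_mul hp, coeff_det_one_add_X_smul_eq_sum_minors]

end Matrix

def scaledAmat (n d : ℕ) (l : Fin n) : Matrix (Fin n) (Fin n) (JacR n) :=
  of fun i j => (-(d : JacR n) * X (i, l) ^ (d - 1)) * Amat n i j

theorem mapMatrix_aeval_piSingle_X_diffMat (n d : ℕ) (l : Fin n) :
    (aeval (Pi.single l (Polynomial.X : Polynomial (JacR n)))).mapMatrix (diffMat n d) =
      1 + (Polynomial.X ^ (d - 1) : Polynomial (JacR n)) • (scaledAmat n d l).map Polynomial.C := by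
  ext i j : 1
  have hL : aeval (Pi.single l (Polynomial.X : Polynomial (JacR n)))
      (∑ k : Fin n, C (X (i, k) : JacR n) * X k) = Polynomial.C (X (i, l)) * Polynomial.X := by
    simp [Pi.single_apply, Polynomial.algebraMap_eq]
  simp only [AlgHom.mapMatrix_apply, map_apply, diffMat, degLinMap, map_sub, pderiv_X,
    Pi.single_apply, Derivation.leibniz_pow, map_sum, Derivation.leibniz, smul_eq_mul, mul_ite,
    mul_one, mul_zero, derivation_C, add_zero, Finset.sum_ite_eq', Finset.mem_univ, ↓reduceIte,
    nsmul_eq_mul, MonoidWithZeroHom.map_ite_one_zero, map_mul, map_natCast, map_pow, hL, algHom_C,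
    Polynomial.algebraMap_eq, scaledAmat, neg_mul, Amat, Matrix.add_apply, one_apply,
    Matrix.smul_apply, of_apply, map_neg]
  ring

theorem det_submatrix_scaledAmat (n d : ℕ) (l : Fin n) (s : Finset (Fin n)) :
    ((scaledAmat n d l).submatrix (Subtype.val : s → Fin n) Subtype.val).det =
      (-(d : JacR n)) ^ s.card *
        (((Amat n).submatrix (Subtype.val : s → Fin n) Subtype.val).det *
          ∏ i ∈ s, (X (i, l) : JacR n) ^ (d - 1)) := by
  have h : (scaledAmat n d l).submatrix (Subtype.val : s → Fin n) (Subtype.val : s → Fin n) =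
      of fun i j => (-(d : JacR n) * X (i.1, l) ^ (d - 1)) *
        (Amat n).submatrix (Subtype.val : s → Fin n) (Subtype.val : s → Fin n) i j := rfl
  rw [h, det_mul_column, Finset.prod_coe_sort s (fun i => -(d : JacR n) * X (i, l) ^ (d - 1)),
    Finset.prod_mul_distrib, Finset.prod_const]
  ring

theorem stmt2_general (n d : ℕ) (hd : 2 ≤ d) (k : ℕ) (l : Fin n) :
    coeff (Finsupp.single l (k * (d - 1))) (jacPoly n d) =
      (-(d : JacR n)) ^ k *
        ∑ s ∈ Finset.univ.powersetCard k,
          ((Amat n).submatrix (Subtype.val : {x // x ∈ s} → Fin n) Subtype.val).det *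
            ∏ i ∈ s, (X (i, l) : JacR n) ^ (d - 1) := by
  rw [← coeff_aeval_piSingle_X, jacPoly, AlgHom.map_det, mapMatrix_aeval_piSingle_X_diffMat,
    coeff_det_one_add_X_pow_smul_eq_sum_minors _ (by omega), Finset.mul_sum]
  refine Finset.sum_congr rfl fun s hs => ?_
  rw [det_submatrix_scaledAmat, (Finset.mem_powersetCard.mp hs).2]

/-- for `1 ≤ k ≤ n` and `l ∈ [1,n]`, the coefficient of `x_l^{k(d-1)}` in
`Jac(f)` equals `(-d)^k ∑_{i_1 < ⋯ < i_k} |A|_{(i_1,…,i_k)} ∏_r a_{i_r,l}^{d-1}`. -/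
theorem stmt2 (n d : ℕ) (hn : 1 ≤ n) (hd : 2 ≤ d) (k : ℕ) (hk1 : 1 ≤ k) (hk2 : k ≤ n)
    (l : Fin n) :
    coeff (Finsupp.single l (k * (d - 1))) (jacPoly n d) =
      (-(d : JacR n)) ^ k *
        ∑ s ∈ Finset.univ.powersetCard k,
          ((Amat n).submatrix (Subtype.val : {x // x ∈ s} → Fin n) Subtype.val).det *
            ∏ i ∈ s, (X (i, l) : JacR n) ^ (d - 1) :=
  stmt2_general n d hd k l

end
end

section
/- Let d ≥ 2 and fix l ∈ [1,n]. For all i, j ∈ [1,n], the element (B^n)_{i,j} of R (which equals z(fern_{d,n}, μ(i,j,l))) lies in the ideal J_{d,n}. -/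
open MvPolynomial Matrix

noncomputable section

/-- The ideal `J_{d,n}` generated by the coefficients `J_α` of `Jac(f)` for all
nonzero multi-degrees `α`. -/
def Jideal (n d : ℕ) : Ideal (JacR n) :=
  Ideal.span {r : JacR n | ∃ α : Fin n →₀ ℕ, α ≠ 0 ∧ coeff α (jacPoly n d) = r}

/-- The matrix `B` with entries `B_{i,j} = a_{i,j} · a_{i,l}^{d-1}`. -/
def Bmat (n d : ℕ) (l : Fin n) : Matrix (Fin n) (Fin n) (JacR n) :=
  fun i j => X (i, j) * X (i, l) ^ (d - 1)

lemma diffMat_apply (n d : ℕ) (i j : Fin n) :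
    diffMat n d i j = (if j = i then 1 else 0)
      - (d : MvPolynomial (Fin n) (JacR n)) *
        ((∑ k : Fin n, MvPolynomial.C (MvPolynomial.X (i, k) : JacR n) * MvPolynomial.X k) ^ (d-1)
          * MvPolynomial.C (MvPolynomial.X (i, j) : JacR n)) := by
  have hS : pderiv j (∑ k : Fin n, MvPolynomial.C (MvPolynomial.X (i, k) : JacR n) * MvPolynomial.X k)
      = MvPolynomial.C (MvPolynomial.X (i, j) : JacR n) := by
    rw [map_sum]
    rw [Finset.sum_eq_single j]
    · simp
    · intro k _ hk
      simp [pderiv_mul, pderiv_X, Pi.single_eq_of_ne hk, pderiv_C]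
    · simp
  unfold diffMat degLinMap
  rw [map_sub, Derivation.leibniz_pow, hS, pderiv_X]
  simp only [Pi.single_apply, nsmul_eq_mul, smul_eq_mul, eq_comm]


/-- Evaluation `x_l ↦ X`, `x_j ↦ 0` into `R[X]`. -/
def Emap (n : ℕ) (l : Fin n) : MvPolynomial (Fin n) (JacR n) →+* Polynomial (JacR n) :=
  eval₂Hom (Polynomial.C) (fun j => if j = l then Polynomial.X else 0)

def matE (n d : ℕ) (l : Fin n) : Matrix (Fin n) (Fin n) (Polynomial (JacR n)) :=
  fun i j => (if j = i then 1 else 0)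
    - (d : Polynomial (JacR n)) * (Polynomial.C (Bmat n d l i j) * Polynomial.X ^ (d - 1))

lemma Emap_jacPoly (n d : ℕ) (l : Fin n) :
    Emap n l (jacPoly n d) = (matE n d l).det := by
  unfold jacPoly
  rw [RingHom.map_det]
  refine congrArg Matrix.det (Matrix.ext fun i j => ?_)
  simp only [RingHom.mapMatrix_apply, Matrix.map_apply, diffMat_apply, matE]
  rw [map_sub]
  have h1 : (Emap n l) (if j = i then 1 else 0) = (if j = i then 1 else 0) := by
    split <;> simp
  rw [h1, _root_.map_mul, _root_.map_mul, map_pow, map_natCast]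
  have hS : (Emap n l) (∑ k : Fin n, MvPolynomial.C (MvPolynomial.X (i, k) : JacR n) * MvPolynomial.X k)
      = Polynomial.C (MvPolynomial.X (i, l)) * Polynomial.X := by
    rw [map_sum, Finset.sum_eq_single l]
    · simp [Emap]
    · intro k _ hk
      simp [Emap, hk]
    · simp
  rw [hS]
  have hC : ∀ r : JacR n, (Emap n l) (MvPolynomial.C r) = Polynomial.C r := by
    intro r; simp [Emap]
  rw [hC]
  rw [mul_pow, ← Polynomial.C_pow, Bmat, Polynomial.C_mul]
  ring

lemma coeff_Emap_mem (n d : ℕ) (l : Fin n) (m : ℕ) (hm : 1 ≤ m) :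
    ((Emap n l) (jacPoly n d)).coeff m ∈ Jideal n d := by
  have : (Emap n l) (jacPoly n d) =
      ∑ α ∈ (jacPoly n d).support,
        Polynomial.C (MvPolynomial.coeff α (jacPoly n d)) *
          ∏ k ∈ α.support, (if k = l then (Polynomial.X : Polynomial (JacR n)) else 0) ^ α k := by
    rw [Emap, coe_eval₂Hom]
    exact MvPolynomial.eval₂_eq _ _ _
  rw [this, Polynomial.finset_sum_coeff]
  refine Ideal.sum_mem _ fun α hα => ?_
  rw [Polynomial.coeff_C_mul]
  by_cases h0 : α = 0
  · subst h0
    simp only [Finsupp.support_zero, Finset.prod_empty, mul_one, Polynomial.coeff_one,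
      if_neg (by omega : ¬ m = 0), mul_zero]
    exact Ideal.zero_mem _
  · exact Ideal.mul_mem_right _ _ (Ideal.subset_span ⟨α, h0, rfl⟩)

lemma det_matE_coeff_zero (n d : ℕ) (l : Fin n) (hd : 2 ≤ d) :
    ((matE n d l).det).coeff 0 = 1 := by
  rw [Polynomial.coeff_zero_eq_eval_zero, ← Polynomial.coe_evalRingHom, RingHom.map_det]
  have : (Polynomial.evalRingHom (0 : JacR n)).mapMatrix (matE n d l) = 1 := by
    refine Matrix.ext fun i j => ?_
    simp only [RingHom.mapMatrix_apply, Matrix.map_apply, matE, Polynomial.coe_evalRingHom,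
      Polynomial.eval_sub, Polynomial.eval_mul, Polynomial.eval_pow, Polynomial.eval_X,
      Polynomial.eval_C, Polynomial.eval_natCast, zero_pow (by omega : d - 1 ≠ 0), mul_zero,
      sub_zero, Matrix.one_apply]
    split <;> split <;> simp_all
  rw [this, Matrix.det_one]

/-- Coefficient extraction for substitution `X ↦ C c * X ^ e`. -/
lemma coeff_subst {S : Type*} [CommRing S] (c : S) (e : ℕ) (he : 1 ≤ e) (p : Polynomial S) (k : ℕ) :
    (Polynomial.eval₂ Polynomial.C (Polynomial.C c * Polynomial.X ^ e) p).coeff (k * e)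
      = c ^ k * p.coeff k := by
  rw [Polynomial.eval₂_eq_sum, Polynomial.sum, Polynomial.finset_sum_coeff]
  have hterm : ∀ j : ℕ, (Polynomial.C (p.coeff j) * (Polynomial.C c * Polynomial.X ^ e) ^ j).coeff (k * e)
      = if j = k then c ^ k * p.coeff k else 0 := by
    intro j
    rw [mul_pow, ← Polynomial.C_pow, ← mul_assoc, ← Polynomial.C_mul, ← pow_mul,
      Polynomial.coeff_C_mul, Polynomial.coeff_X_pow]
    by_cases hj : j = k
    · subst hj; simp [mul_comm]
    · rw [if_neg (fun h => hj (Nat.eq_of_mul_eq_mul_left (show 0 < e by omega)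
        (show e * j = e * k by rw [← h, mul_comm]))), mul_zero, if_neg hj]
  by_cases hk : k ∈ p.support
  · rw [Finset.sum_eq_single k (fun j _ hj => by rw [hterm j, if_neg hj]) (fun h => (h hk).elim),
      hterm k, if_pos rfl]
  · have h0 : p.coeff k = 0 := Polynomial.notMem_support_iff.mp hk
    rw [h0, mul_zero]
    refine Finset.sum_eq_zero fun j hj => ?_
    rw [hterm j]
    split
    · rw [h0, mul_zero]
    · rfl

lemma psi_charpolyRev {n d : ℕ} (l : Fin n) {S : Type*} [CommRing S] (π : JacR n →+* S) :
    Polynomial.eval₂RingHom (Polynomial.C (R := S)) (Polynomial.C ((d : S)) * Polynomial.X ^ (d-1))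
        (((Bmat n d l).map π).charpolyRev)
      = Polynomial.map π ((matE n d l).det) := by
  rw [← Polynomial.coe_mapRingHom, Matrix.charpolyRev, RingHom.map_det, RingHom.map_det]
  refine congrArg Matrix.det (Matrix.ext fun i j => ?_)
  simp only [RingHom.mapMatrix_apply, Matrix.map_apply, Matrix.sub_apply, Matrix.one_apply,
    Matrix.smul_apply, smul_eq_mul, matE, Polynomial.coe_eval₂RingHom, Polynomial.coe_mapRingHom,
    Polynomial.eval₂_sub, Polynomial.eval₂_mul, Polynomial.eval₂_X, Polynomial.eval₂_C,
    Polynomial.map_sub, Polynomial.map_mul, Polynomial.map_natCast, Polynomial.map_pow,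
    Polynomial.map_C, Polynomial.map_X]
  by_cases h : i = j
  · subst h
    simp only [eq_self_iff_true, if_true, Polynomial.eval₂_one, Polynomial.map_one, Polynomial.C_eq_natCast]
    ring
  · simp only [if_neg h, if_neg (Ne.symm h), Polynomial.eval₂_zero, Polynomial.map_zero,
      Polynomial.C_eq_natCast]
    ring


/-- every entry `(B^n)_{i,j}` (which equals `z(fern_{d,n}, μ(i,j,l))`)
lies in the ideal `J_{d,n}`. -/
theorem stmt4 (n d : ℕ) (hn : 1 ≤ n) (hd : 2 ≤ d) (l : Fin n) (i j : Fin n) :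
    (Bmat n d l ^ n) i j ∈ Jideal n d := by
  by_cases hJ : Jideal n d = ⊤
  · rw [hJ]; exact Submodule.mem_top
  haveI : Nontrivial (JacR n ⧸ Jideal n d) := Ideal.Quotient.nontrivial_iff.mpr hJ
  set π := Ideal.Quotient.mk (Jideal n d) with hπ
  set M := (Bmat n d l).map π with hM
  have h1 : Polynomial.map (π : JacR n →+* _) ((matE n d l).det) = 1 := by
    ext m
    rw [Polynomial.coeff_map]
    rcases Nat.eq_zero_or_pos m with hm | hm
    · subst hm; rw [det_matE_coeff_zero n d l hd]; simp
    · rw [Polynomial.coeff_one, if_neg (by omega)]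
      have hmem := coeff_Emap_mem n d l m hm
      rw [Emap_jacPoly n d l] at hmem
      exact Ideal.Quotient.eq_zero_iff_mem.mpr hmem
  have h2 := psi_charpolyRev (d := d) l π
  rw [h1] at h2
  have hcu : IsUnit ((d : JacR n ⧸ Jideal n d)) := by
    have hq : IsUnit ((d : ℚ)) := isUnit_iff_ne_zero.2 (by positivity)
    have := hq.map (algebraMap ℚ (JacR n ⧸ Jideal n d))
    rwa [map_natCast] at this
  rw [← hM] at h2
  have h3 : M.charpolyRev = 1 := by
    ext k
    have hk := coeff_subst ((d : JacR n ⧸ Jideal n d)) (d-1) (by omega) M.charpolyRev k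
    rw [← Polynomial.coe_eval₂RingHom, h2] at hk
    rcases Nat.eq_zero_or_pos k with h0 | h0
    · subst h0; simpa using hk.symm
    · rw [Polynomial.coeff_one, if_neg (by omega : ¬ k = 0)]
      rw [Polynomial.coeff_one, if_neg (by
        have : d - 1 ≠ 0 := by omega
        exact Nat.mul_ne_zero (by omega) this)] at hk
      exact ((hcu.pow k).mul_right_eq_zero).mp hk.symm
  have h4 : M.charpoly = Polynomial.X ^ n := by
    have hrev : M.charpoly.reverse = 1 := by rw [Matrix.reverse_charpoly, h3]
    have hdeg : M.charpoly.natDegree = n := by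
      rw [Matrix.charpoly_natDegree_eq_dim, Fintype.card_fin]
    ext k
    rcases lt_trichotomy k n with hlt | heq | hgt
    · have : M.charpoly.coeff k = M.charpoly.reverse.coeff (n - k) := by
        rw [Polynomial.coeff_reverse, hdeg, Polynomial.revAt_le (by omega), Nat.sub_sub_self hlt.le]
      rw [this, hrev, Polynomial.coeff_one, if_neg (by omega), Polynomial.coeff_X_pow,
        if_neg (by omega)]
    · subst heq
      rw [Polynomial.coeff_X_pow, if_pos rfl]
      have hmon := (Matrix.charpoly_monic M).coeff_natDegree
      rw [hdeg] at hmon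
      exact hmon
    · rw [Polynomial.coeff_eq_zero_of_natDegree_lt (by rw [hdeg]; exact hgt), Polynomial.coeff_X_pow,
        if_neg (by omega)]
  have h5 : M ^ n = 0 := by
    have hch := M.aeval_self_charpoly
    rwa [h4, map_pow, Polynomial.aeval_X] at hch
  have hz : π ((Bmat n d l ^ n) i j) = 0 := by
    have hmap : ((Bmat n d l) ^ n).map π = M ^ n := by
      rw [hM]
      simpa [RingHom.mapMatrix_apply] using map_pow (π.mapMatrix) (Bmat n d l) n
    have : π ((Bmat n d l ^ n) i j) = (((Bmat n d l) ^ n).map π) i j := rfl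
    rw [this, hmap, h5, Matrix.zero_apply]
  exact Ideal.Quotient.eq_zero_iff_mem.mp hz
end
end

section
/- Let d = 1, so Jac(f) = det(I − A) ∈ R, and let J_{1,n} be the ideal of R generated by the homogeneous components of positive degree of det(I − A). Then for all i, j ∈ [1,n], the entry (A^n)_{i,j} (which equals z(fern_{1,n}, μ) for the path tree fern_{1,n} with root labeled i and its single leaf labeled j) lies in J_{1,n}. -/
open MvPolynomial Matrix

noncomputable section

/-- For `d = 1` the Jacobian of `f` is `det(I - A) ∈ R`, and `J_{1,n}` is the ideal of `R`
generated by all homogeneous components of `det(I - A)` except the constant term. -/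
def Jideal1 (n : ℕ) : Ideal (JacR n) :=
  Ideal.span {r : JacR n | ∃ k : ℕ, k ≠ 0 ∧ homogeneousComponent k (1 - Amat n).det = r}

/-!
By Cayley–Hamilton, `A ^ n = -∑_{m < n} c_m A ^ m`, where the `c_m` are the
coefficients of the characteristic polynomial `det (X - A)`. Since `c_m` is homogeneous of
degree `n - m` in the entries of the generic matrix `A`, evaluating at `X = 1` shows that
`c_m` is exactly the homogeneous component of degree `n - m` of `det (1 - A)`; for `m < n` it
is therefore one of the generators of `J_{1,n}`.
-/

namespace Matrix

variable {R ι : Type*} [CommRing R] [Nontrivial R] [Fintype ι] [DecidableEq ι]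

theorem pow_card_eq_neg_sum_charpoly_coeff_smul (M : Matrix ι ι R) :
    M ^ Fintype.card ι =
      -∑ m ∈ Finset.range (Fintype.card ι), M.charpoly.coeff m • M ^ m := by
  have h := M.aeval_self_charpoly
  rw [M.charpoly_monic.as_sum, M.charpoly_natDegree_eq_dim] at h
  simpa [Polynomial.aeval_def, Polynomial.eval₂_finsetSum, Algebra.smul_def,
    eq_neg_iff_add_eq_zero] using h

theorem pow_card_apply_mem_of_charpoly_coeff_mem (M : Matrix ι ι R) {I : Ideal R}
    (hI : ∀ m < Fintype.card ι, M.charpoly.coeff m ∈ I) (i j : ι) :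
    (M ^ Fintype.card ι) i j ∈ I := by
  rw [pow_card_eq_neg_sum_charpoly_coeff_smul, neg_apply, sum_apply]
  refine I.neg_mem (I.sum_mem fun m hm => ?_)
  rw [smul_apply, smul_eq_mul]
  exact I.mul_mem_right _ (hI m (Finset.mem_range.mp hm))

variable (R ι)

theorem det_one_sub_mvPolynomialX_eq_sum_univ_coeff :
    (1 - mvPolynomialX ι ι R).det =
      ∑ m ∈ Finset.range (Fintype.card ι + 1), (charpoly.univ R ι).coeff m := by
  rw [← map_one (scalar ι), ← eval_charpoly, Polynomial.eval_eq_sum_range,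
    charpoly.univ_natDegree]
  simp

theorem homogeneousComponent_det_one_sub_mvPolynomialX {k : ℕ} (hk : k ≤ Fintype.card ι) :
    homogeneousComponent k (1 - mvPolynomialX ι ι R).det =
      (charpoly.univ R ι).coeff (Fintype.card ι - k) := by
  have hcomp : ∀ m ≤ Fintype.card ι, homogeneousComponent k ((charpoly.univ R ι).coeff m) =
      if k = Fintype.card ι - m then (charpoly.univ R ι).coeff m else 0 := fun m hm =>
    homogeneousComponent_of_mem (charpoly.univ_coeff_isHomogeneous R ι m _ (by omega))
  rw [det_one_sub_mvPolynomialX_eq_sum_univ_coeff, map_sum,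
    Finset.sum_eq_single (Fintype.card ι - k)]
  · rw [hcomp _ (by omega), if_pos (by omega)]
  · intro m hm hmk
    have hm' := Finset.mem_range.mp hm
    rw [hcomp m (by omega), if_neg (by omega)]
  · intro h
    exact absurd (Finset.mem_range.mpr (by omega)) h

end Matrix

theorem stmt9_general (n : ℕ) (i j : Fin n) :
    (Amat n ^ n) i j ∈ Jideal1 n := by
  have hpow := (Amat n).pow_card_apply_mem_of_charpoly_coeff_mem (I := Jideal1 n) ?_ i j
  · rwa [Fintype.card_fin] at hpow
  intro m hm
  rw [Fintype.card_fin] at hm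
  have hcomp := homogeneousComponent_det_one_sub_mvPolynomialX ℚ (Fin n) (k := n - m)
    (by simp)
  rw [Fintype.card_fin, Nat.sub_sub_self hm.le] at hcomp
  exact Ideal.subset_span ⟨n - m, by omega, hcomp⟩

/-- for `d = 1`, every entry `(A^n)_{i,j}` (which equals
`z(fern_{1,n}, μ)` for the path tree with root labeled `i` and leaf labeled `j`)
lies in `J_{1,n}`. -/
theorem stmt9 (n : ℕ) (hn : 1 ≤ n) (i j : Fin n) :
    (Amat n ^ n) i j ∈ Jideal1 n :=
  stmt9_general n i j
end
end

section
/- Let n = 3 and d = 2, and set z₁ = a_{1,2} · Σ_{m=1}^{3} Σ_{p=1}^{3} a_{1,m} a_{m,3} a_{m,p} a_{p,1}² ∈ R (this is z(fern_{2,3}, μ) for the root-leaf labeling μ = (1,(2),(3),(1,1))). Then z₁ ∉ J_{2,3}. -/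
set_option maxHeartbeats 2000000


open MvPolynomial Matrix

noncomputable section

/-- `R` is the polynomial ring `ℚ[a_{i,j} : 1 ≤ i,j ≤ 3]`. -/
abbrev JacR3 : Type := MvPolynomial (Fin 3 × Fin 3) ℚ

/-- The `i`-th component of the degree `2`-linear map on 3 variables:
`f_i = x_i - (∑_j a_{i,j} x_j)²`. -/
def degLinMap23 (i : Fin 3) : MvPolynomial (Fin 3) JacR3 :=
  X i - (∑ j : Fin 3, C (X (i, j) : JacR3) * X j) ^ 2

/-- The Jacobian `Jac(f) = det(D(f))` with `(D(f))_{i,j} = ∂f_i/∂x_j`. -/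
def jacPoly23 : MvPolynomial (Fin 3) JacR3 :=
  (Matrix.of fun i j : Fin 3 => pderiv j (degLinMap23 i)).det

/-- The ideal `J_{2,3}` generated by the coefficients `J_α` of `Jac(f)` for all
nonzero multi-degrees `α`. -/
def Jideal23 : Ideal JacR3 :=
  Ideal.span {r : JacR3 | ∃ α : Fin 3 →₀ ℕ, α ≠ 0 ∧ coeff α jacPoly23 = r}

/-- `z₁ = a_{1,2} ∑_{m,p} a_{1,m} a_{m,3} a_{m,p} a_{p,1}²`, i.e.
`z(fern_{2,3}, (1,(2),(3),(1,1)))`.  (Indices `1,2,3` are `0,1,2 : Fin 3`.) -/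
def zOne : JacR3 :=
  (X (0, 1) : JacR3) *
    ∑ m : Fin 3, ∑ p : Fin 3, X (0, m) * X (m, 2) * X (m, p) * X (p, 0) ^ 2

-- cyclic substitution homs
def cycSub0 : Fin 3 × Fin 3 → JacR3 := fun v =>
  if v = (0,1) ∨ v = (1,2) ∨ v = (2,0) then X v else 0

def cycSub1 : Fin 3 × Fin 3 → JacR3 := fun v =>
  if v = (0,2) ∨ v = (1,0) ∨ v = (2,1) then X v else 0

def ph0 : JacR3 →+* JacR3 := (aeval cycSub0).toRingHom
def ph1 : JacR3 →+* JacR3 := (aeval cycSub1).toRingHom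


lemma cyc0_vals :
    cycSub0 (0,0) = 0 ∧ cycSub0 (0,1) = X (0,1) ∧ cycSub0 (0,2) = 0 ∧
    cycSub0 (1,0) = 0 ∧ cycSub0 (1,1) = 0 ∧ cycSub0 (1,2) = X (1,2) ∧
    cycSub0 (2,0) = X (2,0) ∧ cycSub0 (2,1) = 0 ∧ cycSub0 (2,2) = 0 := by
  refine ⟨?_,?_,?_,?_,?_,?_,?_,?_,?_⟩ <;>
    simp (config := { decide := true }) [cycSub0]

lemma cyc1_vals :
    cycSub1 (0,0) = 0 ∧ cycSub1 (0,1) = 0 ∧ cycSub1 (0,2) = X (0,2) ∧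
    cycSub1 (1,0) = X (1,0) ∧ cycSub1 (1,1) = 0 ∧ cycSub1 (1,2) = 0 ∧
    cycSub1 (2,0) = 0 ∧ cycSub1 (2,1) = X (2,1) ∧ cycSub1 (2,2) = 0 := by
  refine ⟨?_,?_,?_,?_,?_,?_,?_,?_,?_⟩ <;>
    simp (config := { decide := true }) [cycSub1]

lemma mapJac0 : MvPolynomial.map ph0 jacPoly23 =
    1 - C ((8 : JacR3) * (X (0,1) * X (1,2) * X (2,0)) ^ 2) * (X 0 * X 1 * X 2) := by
  obtain ⟨c1,c2,c3,c4,c5,c6,c7,c8,c9⟩ := cyc0_vals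
  rw [jacPoly23, RingHom.map_det]
  rw [Matrix.det_fin_three]
  simp (config := { decide := true, maxSteps := 100000000 }) only [RingHom.mapMatrix_apply, Matrix.map_apply,
    Matrix.of_apply, degLinMap23,
    Fin.sum_univ_three, _root_.map_sub, _root_.map_add, _root_.map_ofNat, _root_.map_pow, map_natCast, if_true, if_false, pderiv_pow, pderiv_mul, pderiv_C, pderiv_X,
    Pi.single_apply, MvPolynomial.map_C, MvPolynomial.map_X, _root_.map_mul, _root_.map_one,
    ph0, AlgHom.toRingHom_eq_coe, RingHom.coe_coe, aeval_X,
    c1,c2,c3,c4,c5,c6,c7,c8,c9, map_zero]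
  ring


def ph1' : JacR3 →+* JacR3 := (aeval cycSub1).toRingHom

lemma mapJac1 : MvPolynomial.map ph1 jacPoly23 =
    1 - C ((8 : JacR3) * (X (0,2) * X (1,0) * X (2,1)) ^ 2) * (X 0 * X 1 * X 2) := by
  obtain ⟨c1,c2,c3,c4,c5,c6,c7,c8,c9⟩ := cyc1_vals
  rw [jacPoly23, RingHom.map_det]
  rw [Matrix.det_fin_three]
  simp (config := { decide := true, maxSteps := 100000000 }) only [RingHom.mapMatrix_apply,
    Matrix.map_apply,
    Matrix.of_apply, degLinMap23,
    Fin.sum_univ_three, _root_.map_sub, _root_.map_add, _root_.map_ofNat, _root_.map_pow,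
    map_natCast, if_true, if_false, pderiv_pow, pderiv_mul, pderiv_C, pderiv_X,
    Pi.single_apply, MvPolynomial.map_C, MvPolynomial.map_X, _root_.map_mul, _root_.map_one,
    ph1, AlgHom.toRingHom_eq_coe, RingHom.coe_coe, aeval_X,
    c1,c2,c3,c4,c5,c6,c7,c8,c9, map_zero]
  ring

def E0 : (Fin 3 × Fin 3) →₀ ℕ :=
  Finsupp.single (0,1) 2 + Finsupp.single (1,2) 2 + Finsupp.single (2,0) 2

def E1 : (Fin 3 × Fin 3) →₀ ℕ :=
  Finsupp.single (0,2) 2 + Finsupp.single (1,0) 2 + Finsupp.single (2,1) 2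

def B111 : Fin 3 →₀ ℕ := Finsupp.single 0 1 + Finsupp.single 1 1 + Finsupp.single 2 1

lemma T0mon : ((X (0,1) * X (1,2) * X (2,0) : JacR3)) ^ 2 = monomial E0 1 := by
  rw [show ((X (0,1) * X (1,2) * X (2,0) : JacR3)) ^ 2
      = X (0,1) ^ 2 * X (1,2) ^ 2 * X (2,0) ^ 2 by ring,
    X_pow_eq_monomial, X_pow_eq_monomial, X_pow_eq_monomial, monomial_mul, monomial_mul, E0]
  norm_num

lemma T1mon : ((X (0,2) * X (1,0) * X (2,1) : JacR3)) ^ 2 = monomial E1 1 := by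
  rw [show ((X (0,2) * X (1,0) * X (2,1) : JacR3)) ^ 2
      = X (0,2) ^ 2 * X (1,0) ^ 2 * X (2,1) ^ 2 by ring,
    X_pow_eq_monomial, X_pow_eq_monomial, X_pow_eq_monomial, monomial_mul, monomial_mul, E1]
  norm_num

lemma XBmon : (X 0 * X 1 * X 2 : MvPolynomial (Fin 3) JacR3) = monomial B111 1 := by
  rw [show (X 0 * X 1 * X 2 : MvPolynomial (Fin 3) JacR3)
      = X 0 ^ 1 * X 1 ^ 1 * X 2 ^ 1 by ring,
    X_pow_eq_monomial, X_pow_eq_monomial, X_pow_eq_monomial, monomial_mul, monomial_mul, B111]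
  norm_num


lemma eightMon (E : (Fin 3 × Fin 3) →₀ ℕ) : (8:JacR3) * monomial E 1 = monomial E (8:ℚ) := by
  rw [show (8:JacR3) = C (8:ℚ) from (map_ofNat (C : ℚ →+* JacR3) 8).symm, C_mul_monomial, mul_one]

lemma constCoeff_ph0 (r : JacR3) : constantCoeff (ph0 r) = constantCoeff r := by
  have : (constantCoeff : JacR3 →+* ℚ).comp ph0 = constantCoeff := by
    apply MvPolynomial.ringHom_ext
    · intro q; simp [ph0]
    · intro v
      simp only [RingHom.comp_apply, ph0, AlgHom.toRingHom_eq_coe, RingHom.coe_coe, aeval_X,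
        cycSub0]
      split <;> simp
  exact DFunLike.congr_fun this r

lemma constCoeff_ph1 (r : JacR3) : constantCoeff (ph1 r) = constantCoeff r := by
  have : (constantCoeff : JacR3 →+* ℚ).comp ph1 = constantCoeff := by
    apply MvPolynomial.ringHom_ext
    · intro q; simp [ph1]
    · intro v
      simp only [RingHom.comp_apply, ph1, AlgHom.toRingHom_eq_coe, RingHom.coe_coe, aeval_X,
        cycSub1]
      split <;> simp
  exact DFunLike.congr_fun this r

lemma F_gen (α : Fin 3 →₀ ℕ) (hα : α ≠ 0) (r : JacR3) :
    coeff E0 (ph0 (r * coeff α jacPoly23)) = coeff E1 (ph1 (r * coeff α jacPoly23)) := by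
  have h0 : ph0 (coeff α jacPoly23) = if B111 = α then -(monomial E0 (8:ℚ)) else 0 := by
    rw [show ph0 (coeff α jacPoly23) = coeff α (MvPolynomial.map ph0 jacPoly23) from
      (coeff_map ph0 jacPoly23 α).symm, mapJac0, T0mon, XBmon, eightMon, C_mul_monomial,
      mul_one, coeff_sub, coeff_monomial, coeff_one]
    rw [if_neg (by exact fun h => hα h.symm)]
    split_ifs with h <;> simp
  have h1 : ph1 (coeff α jacPoly23) = if B111 = α then -(monomial E1 (8:ℚ)) else 0 := by
    rw [show ph1 (coeff α jacPoly23) = coeff α (MvPolynomial.map ph1 jacPoly23) from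
      (coeff_map ph1 jacPoly23 α).symm, mapJac1, T1mon, XBmon, eightMon, C_mul_monomial,
      mul_one, coeff_sub, coeff_monomial, coeff_one]
    rw [if_neg (by exact fun h => hα h.symm)]
    split_ifs with h <;> simp
  rw [_root_.map_mul, _root_.map_mul, h0, h1]
  split_ifs with h
  · rw [mul_neg, mul_neg, coeff_neg, coeff_neg, coeff_mul_monomial', coeff_mul_monomial',
      if_pos le_rfl, if_pos le_rfl, tsub_self, tsub_self]
    rw [show (coeff 0 (ph0 r) : ℚ) = constantCoeff (ph0 r) from rfl,
      show (coeff 0 (ph1 r) : ℚ) = constantCoeff (ph1 r) from rfl,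
      constCoeff_ph0, constCoeff_ph1]
  · simp

lemma ph0_zOne : ph0 zOne = monomial E0 1 := by
  rw [← T0mon]
  obtain ⟨c1,c2,c3,c4,c5,c6,c7,c8,c9⟩ := cyc0_vals
  simp [zOne, ph0, Fin.sum_univ_three, c1,c2,c3,c4,c5,c6,c7,c8,c9]
  ring

lemma ph1_zOne : ph1 zOne = 0 := by
  obtain ⟨c1,c2,c3,c4,c5,c6,c7,c8,c9⟩ := cyc1_vals
  simp only [zOne, _root_.map_mul, ph1, AlgHom.toRingHom_eq_coe, RingHom.coe_coe, aeval_X, c2,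
    zero_mul]

/-- `z₁ ∉ J_{2,3}`. -/
theorem stmt12 : zOne ∉ Jideal23 := by
  intro h
  have key : ∀ r : JacR3, coeff E0 (ph0 (r * zOne)) = coeff E1 (ph1 (r * zOne)) := by
    refine Submodule.span_induction (p := fun p _ => ∀ r : JacR3,
        coeff E0 (ph0 (r * p)) = coeff E1 (ph1 (r * p))) ?_ ?_ ?_ ?_ h
    · rintro x ⟨α, hα, rfl⟩ r
      exact F_gen α hα r
    · intro r; simp
    · intro x y _ _ hx hy r
      simp only [mul_add, _root_.map_add, coeff_add, hx r, hy r]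
    · intro a x _ hx r
      rw [smul_eq_mul, ← mul_assoc]
      exact hx (r * a)
  have h1 := key 1
  rw [one_mul, ph0_zOne, ph1_zOne] at h1
  simp [coeff_monomial] at h1

end
end
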